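/- Let Σ be a finite alphabet. The partial order ≤ on reduced pointed Σ-labelled rooted trees is Noetherian (converse well-founded): there is no infinite strictly ≤-increasing sequence of reduced pointed Σ-labelled rooted trees; equivalently, every nonempty set of reduced pointed Σ-labelled rooted trees contains a ≤-maximal element. -/
import Mathlib


inductive PreTree (α : Type) : Type
  | node : Bool → List (α × PreTree α) → PreTree α

namespace PreTree

variable {α : Type}

def mark : PreTree α → Bool
  | node b _ => b

def children : PreTree α → List (α × PreTree α)
  | node _ cs => cs

def le : PreTree α → PreTree α → Prop
  | node b₁ c₁, node b₂ c₂ =>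
      (b₂ = true → b₁ = true) ∧
      ∀ q, q ∈ c₂ → ∃ p, p ∈ c₁ ∧ p.1 = q.1 ∧ le p.2 q.2
termination_by _ t₂ => sizeOf t₂
decreasing_by
  have h := List.sizeOf_lt_of_mem ‹q ∈ c₂›
  obtain ⟨qa, qt⟩ := q
  simp at h ⊢
  omega

-- The reduced form of a tree: reduce all child subtrees, then for each
-- label keep only the `≤`-minimal attached subtrees.
open scoped Classical in
noncomputable def reduce : PreTree α → PreTree α
  | node b cs =>
      let cs' : List (α × PreTree α) := cs.attach.map fun p => (p.1.1, reduce p.1.2)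
      node b (cs'.filter fun q =>
        decide (∀ q' ∈ cs', q'.1 = q.1 → le q'.2 q.2 → le q.2 q'.2))
termination_by t => sizeOf t
decreasing_by
  have h := List.sizeOf_lt_of_mem p.2
  obtain ⟨⟨pa, pt⟩, hp⟩ := p
  simp at h ⊢
  omega

/-- A tree is reduced if it equals its reduced form. -/
def Reduced (T : PreTree α) : Prop := reduce T = T

/-- The number of marked (point) vertices of a tree. -/
def markCount : PreTree α → ℕ
  | node b cs => (cond b 1 0) + (cs.attach.map fun p => markCount p.1.2).sum
termination_by t => sizeOf t
decreasing_by
  have h := List.sizeOf_lt_of_mem p.2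
  obtain ⟨⟨pa, pt⟩, hp⟩ := p
  simp at h ⊢
  omega

/-- A pointed tree: exactly one vertex is marked as the point. -/
def Pointed (T : PreTree α) : Prop := markCount T = 1

/-- Remove all point marks. -/
def unmark : PreTree α → PreTree α
  | node _ cs => node false (cs.attach.map fun p => (p.1.1, unmark p.1.2))
termination_by t => sizeOf t
decreasing_by
  have h := List.sizeOf_lt_of_mem p.2
  obtain ⟨⟨pa, pt⟩, hp⟩ := p
  simp at h ⊢
  omega

/-- Graft the tree `S` onto the point of `T` (identifying the point of `T`
with the root of `S`); the marks of `S` determine the new point. -/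
def graft (S : PreTree α) : PreTree α → PreTree α
  | node b cs =>
      if b then node S.mark (cs ++ S.children)
      else node b (cs.attach.map fun p => (p.1.1, graft S p.1.2))
termination_by t => sizeOf t
decreasing_by
  have h := List.sizeOf_lt_of_mem p.2
  obtain ⟨⟨pa, pt⟩, hp⟩ := p
  simp at h ⊢
  omega

/-- Move the point of `T` to its root. -/
def pointAtRoot (T : PreTree α) : PreTree α := node true (unmark T).children

/-- Pointed tree concatenation `T ∘ S`. -/
noncomputable def concat (T S : PreTree α) : PreTree α := reduce (graft S T)

/-- The domain operation `D(T)` on pointed trees. -/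
noncomputable def domTree (T : PreTree α) : PreTree α := reduce (pointAtRoot T)

/-- The trivial pointed tree: one vertex, both root and point. -/
def trivialTree : PreTree α := node true []

/-- The two-vertex pointed tree with a single `a`-labelled edge, point at the child. -/
def arrow (a : α) : PreTree α := node false [(a, node true [])]


/-- Set-theoretic equality of trees (children lists regarded as sets). -/
def eqv : PreTree α → PreTree α → Prop
  | node b₁ c₁, node b₂ c₂ =>
      b₁ = b₂ ∧
      (∀ p, p ∈ c₁ → ∃ q, q ∈ c₂ ∧ p.1 = q.1 ∧ eqv p.2 q.2) ∧
      (∀ q, q ∈ c₂ → ∃ p : {x // x ∈ c₁}, p.1.1 = q.1 ∧ eqv p.1.2 q.2)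
termination_by t₁ _ => sizeOf t₁
decreasing_by
  · have h₁ := List.sizeOf_lt_of_mem ‹p ∈ c₁›
    obtain ⟨pa, pt⟩ := p
    simp at h₁ ⊢
    omega
  · have h₁ := List.sizeOf_lt_of_mem p.2
    obtain ⟨⟨pa, pt⟩, hp⟩ := p
    simp at h₁ ⊢
    omega


/-- The subtree of `T` at position `p` (a list of child indices), if it exists. -/
def subAt : List ℕ → PreTree α → Option (PreTree α)
  | [], t => some t
  | i :: is, node _ cs => (cs[i]?).bind fun p => subAt is p.2

/-- `p` is a vertex of `T`. -/
def IsVertex (T : PreTree α) (p : List ℕ) : Prop := ∃ t, subAt p T = some t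

/-- The vertex `p` of `T` is the point (is marked). -/
def IsPoint (T : PreTree α) (p : List ℕ) : Prop :=
  ∃ t, subAt p T = some t ∧ t.mark = true

/-- There is an `a`-labelled edge of `T` from vertex `p` (the parent) to
vertex `q` (the child). -/
def Edge (T : PreTree α) (a : α) (p q : List ℕ) : Prop :=
  ∃ c, subAt p T = some c ∧ ∃ i t, c.children[i]? = some (a, t) ∧ q = p ++ [i]

theorem root_isVertex (T : PreTree α) : IsVertex T [] := ⟨T, rfl⟩

/-- A homomorphism of pointed labelled rooted trees from `S` to `T`:
a map of vertices preserving the labelled edge relations, sending the root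
to the root and points to points. -/
def HomTree (S T : PreTree α) : Prop :=
  ∃ θ : List ℕ → List ℕ,
    θ [] = [] ∧
    (∀ p, IsVertex S p → IsVertex T (θ p)) ∧
    (∀ a p q, Edge S a p q → Edge T a (θ p) (θ q)) ∧
    (∀ p, IsPoint S p → IsPoint T (θ p))

/-- A homomorphism of the pointed tree `T`, viewed as a relational structure,
into the relational structure `(X, f)`, mapping the root of `T` to `x` and
the point of `T` to `y`. -/
def HomInto {X : Type} (T : PreTree α) (f : α → X → X → Prop) (x y : X) : Prop :=
  ∃ θ : List ℕ → X,
    θ [] = x ∧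
    (∀ a p q, Edge T a p q → f a (θ p) (θ q)) ∧
    (∀ p, IsPoint T p → θ p = y)


end PreTree

namespace FreeKAD

/-- Terms of the signature `{∘, 1, D}`. -/
inductive Term1 (α : Type) : Type
  | var : α → Term1 α
  | one : Term1 α
  | comp : Term1 α → Term1 α → Term1 α
  | dom : Term1 α → Term1 α

/-- Terms of the signature `{∘, +, *, 0, 1, D}` (Kleene algebra with domain). -/
inductive TermK (α : Type) : Type
  | var : α → TermK α
  | zero : TermK α
  | one : TermK α
  | comp : TermK α → TermK α → TermK α
  | add : TermK α → TermK α → TermK α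
  | star : TermK α → TermK α
  | dom : TermK α → TermK α

variable {α : Type}

/-- The relational interpretation of a `{∘, 1, D}`-term over a set `X`,
under an assignment `f` of binary relations on `X` to the variables. -/
def rinterp1 {X : Type} (f : α → X → X → Prop) : Term1 α → X → X → Prop
  | .var a => f a
  | .one => fun x y => x = y
  | .comp s t => fun x y => ∃ z, rinterp1 f s x z ∧ rinterp1 f t z y
  | .dom s => fun x y => x = y ∧ ∃ z, rinterp1 f s x z

/-- The relational interpretation of a `{∘, +, *, 0, 1, D}`-term over a set `X`,
under an assignment `f` of binary relations on `X` to the variables. -/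
def rinterpK {X : Type} (f : α → X → X → Prop) : TermK α → X → X → Prop
  | .var a => f a
  | .zero => fun _ _ => False
  | .one => fun x y => x = y
  | .comp s t => fun x y => ∃ z, rinterpK f s x z ∧ rinterpK f t z y
  | .add s t => fun x y => rinterpK f s x y ∨ rinterpK f t x y
  | .star s => Relation.ReflTransGen (rinterpK f s)
  | .dom s => fun x y => x = y ∧ ∃ z, rinterpK f s x z

/-- Composition of binary relations. -/
def relComp {X : Type} (R S : X → X → Prop) : X → X → Prop :=
  fun x y => ∃ z, R x z ∧ S z y

/-- Union of binary relations. -/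
def relUnion {X : Type} (R S : X → X → Prop) : X → X → Prop :=
  fun x y => R x y ∨ S x y

/-- The domain operation on binary relations. -/
def relDom {X : Type} (R : X → X → Prop) : X → X → Prop :=
  fun x y => x = y ∧ ∃ z, R x z

/-- The identity relation. -/
def relId {X : Type} : X → X → Prop := fun x y => x = y

/-- The empty relation. -/
def relEmpty {X : Type} : X → X → Prop := fun _ _ => False

end FreeKAD

namespace FreeKAD

open PreTree

variable {α : Type}

/-- The single-tree interpretation of `{∘, 1, D}`-terms. -/
noncomputable def interp1 : Term1 α → PreTree α
  | .var a => arrow a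
  | .one => trivialTree
  | .comp s t => concat (interp1 s) (interp1 t)
  | .dom s => domTree (interp1 s)

/-- The set of `≤`-maximal elements of a set of trees. -/
def maximalSet (K : Set (PreTree α)) : Set (PreTree α) :=
  {T | T ∈ K ∧ ∀ S ∈ K, le T S → le S T}

/-- Elementwise lifting of pointed tree concatenation to sets of trees. -/
def liftComp (K L : Set (PreTree α)) : Set (PreTree α) :=
  {U | ∃ T ∈ K, ∃ S ∈ L, U = concat T S}

/-- Elementwise lifting of the domain operation to sets of trees. -/
def liftDom (K : Set (PreTree α)) : Set (PreTree α) :=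
  {U | ∃ T ∈ K, U = domTree T}

/-- Iterated lifted concatenation: `K^0 = {trivial}`, `K^(i+1) = K^i ∘ K`. -/
def powC (K : Set (PreTree α)) : ℕ → Set (PreTree α)
  | 0 => {trivialTree}
  | i + 1 => liftComp (powC K i) K

/-- The standard tree interpretation of `{∘, +, *, 0, 1, D}`-terms. -/
def sinterp : TermK α → Set (PreTree α)
  | .var a => {arrow a}
  | .zero => ∅
  | .one => {trivialTree}
  | .comp s t => maximalSet (liftComp (sinterp s) (sinterp t))
  | .add s t => maximalSet (sinterp s ∪ sinterp t)
  | .star s => maximalSet (⋃ i : ℕ, powC (sinterp s) (i + 1))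
  | .dom s => maximalSet (liftDom (sinterp s))

/-- Equality of sets of trees, with trees compared as (hereditarily finite) sets. -/
def SetEqv (K L : Set (PreTree α)) : Prop :=
  (∀ T ∈ K, ∃ S ∈ L, eqv T S) ∧ (∀ S ∈ L, ∃ T ∈ K, eqv T S)

/-- A set of reduced pointed trees is regular if it is the standard tree
interpretation of some `{∘, +, *, 0, 1, D}`-term. -/
def Regular (L : Set (PreTree α)) : Prop := ∃ t : TermK α, L = sinterp t

/-- The set of reduced trees lying `≤`-below some member of `L`. -/
def down (L : Set (PreTree α)) : Set (PreTree α) :=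
  {T | Reduced T ∧ ∃ S ∈ L, le T S}

end FreeKAD

namespace PreTree
variable {α : Type}

theorem le_node_iff (b₁ b₂ : Bool) (c₁ c₂ : List (α × PreTree α)) :
    le (node b₁ c₁) (node b₂ c₂) ↔
      ((b₂ = true → b₁ = true) ∧
      ∀ q, q ∈ c₂ → ∃ p, p ∈ c₁ ∧ p.1 = q.1 ∧ le p.2 q.2) := by
  rw [le]

theorem le_refl_aux : ∀ (n : ℕ) (t : PreTree α), sizeOf t ≤ n → le t t := by
  intro n
  induction n with
  | zero => intro t h; cases t with | node b cs => simp at h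
  | succ n ih =>
    intro t h
    cases t with
    | node b cs =>
      rw [le_node_iff]
      refine ⟨fun h => h, fun q hq => ⟨q, hq, rfl, ?_⟩⟩
      apply ih
      have := List.sizeOf_lt_of_mem hq
      obtain ⟨qa, qt⟩ := q
      simp at h this ⊢
      omega

theorem le_refl (t : PreTree α) : le t t := le_refl_aux (sizeOf t) t le_rfl

theorem le_trans_aux : ∀ (n : ℕ) (t u v : PreTree α), sizeOf v ≤ n →
    le t u → le u v → le t v := by
  intro n
  induction n with
  | zero => intro t u v h; cases v with | node b cs => simp at h
  | succ n ih =>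
    intro t u v h htu huv
    cases t with | node b₁ c₁ =>
    cases u with | node b₂ c₂ =>
    cases v with | node b₃ c₃ =>
    rw [le_node_iff] at htu huv ⊢
    refine ⟨fun hb => htu.1 (huv.1 hb), fun q hq => ?_⟩
    obtain ⟨p, hp, hpl, hple⟩ := huv.2 q hq
    obtain ⟨r, hr, hrl, hrle⟩ := htu.2 p hp
    refine ⟨r, hr, hrl.trans hpl, ih _ _ _ ?_ hrle hple⟩
    have := List.sizeOf_lt_of_mem hq
    obtain ⟨qa, qt⟩ := q
    simp at h this ⊢
    omega

theorem le_trans' {t u v : PreTree α} (htu : le t u) (huv : le u v) : le t v :=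
  le_trans_aux (sizeOf v) t u v le_rfl htu huv

/-- Height of a tree. -/
def height : PreTree α → ℕ
  | node _ cs => (cs.attach.map fun p => height p.1.2).foldr max 0 + 1
termination_by t => sizeOf t
decreasing_by
  have h := List.sizeOf_lt_of_mem p.2
  obtain ⟨⟨pa, pt⟩, hp⟩ := p
  simp at h ⊢
  omega

theorem height_node (b : Bool) (cs : List (α × PreTree α)) :
    height (node b cs) = (cs.attach.map fun p => height p.1.2).foldr max 0 + 1 := by
  rw [height]

theorem le_foldr_max {a : ℕ} : ∀ {l : List ℕ}, a ∈ l → a ≤ l.foldr max 0 := by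
  intro l
  induction l with
  | nil => simp
  | cons x xs ih =>
    intro h
    rcases List.mem_cons.mp h with h | h
    · simp [h, Nat.le_max_left]
    · exact le_trans (ih h) (by simp [Nat.le_max_right])

theorem foldr_max_le {m : ℕ} : ∀ {l : List ℕ}, (∀ x ∈ l, x ≤ m) → l.foldr max 0 ≤ m := by
  intro l
  induction l with
  | nil => simp
  | cons x xs ih => intro h; simp_all [Nat.max_le]

theorem height_child_lt {b : Bool} {cs : List (α × PreTree α)} {p : α × PreTree α}
    (hp : p ∈ cs) : height p.2 < height (node b cs) := by
  rw [height_node]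
  have : height p.2 ∈ cs.attach.map fun p => height p.1.2 :=
    List.mem_map.mpr ⟨⟨p, hp⟩, List.mem_attach _ _, rfl⟩
  exact Nat.lt_succ_of_le (le_foldr_max this)

theorem height_pos (t : PreTree α) : 1 ≤ height t := by
  cases t with | node b cs => rw [height_node]; omega

theorem height_antitone : ∀ (n : ℕ) (t u : PreTree α), sizeOf u ≤ n →
    le t u → height u ≤ height t := by
  intro n
  induction n with
  | zero => intro t u h; cases u with | node b cs => simp at h
  | succ n ih =>
    intro t u h htu
    cases t with | node b₁ c₁ =>
    cases u with | node b₂ c₂ =>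
    rw [le_node_iff] at htu
    rw [height_node, height_node]
    have : ((c₂.attach.map fun p => height p.1.2).foldr max 0)
        ≤ ((c₁.attach.map fun p => height p.1.2).foldr max 0) := by
      apply foldr_max_le
      intro x hx
      obtain ⟨⟨q, hq⟩, _, rfl⟩ := List.mem_map.mp hx
      obtain ⟨p, hp, _, hple⟩ := htu.2 q hq
      have h1 : height q.2 ≤ height p.2 := by
        refine ih _ _ ?_ hple
        have := List.sizeOf_lt_of_mem hq
        obtain ⟨qa, qt⟩ := q
        simp at h this ⊢
        omega
      have h2 : height p.2 ∈ c₁.attach.map fun p => height p.1.2 :=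
        List.mem_map.mpr ⟨⟨p, hp⟩, List.mem_attach _ _, rfl⟩
      exact h1.trans (le_foldr_max h2)
    omega

theorem height_antitone' {t u : PreTree α} (htu : le t u) : height u ≤ height t :=
  height_antitone (sizeOf u) t u le_rfl htu

/-- Finite invariant spaces. -/
def Inv (α : Type) : ℕ → Type
  | 0 => Bool
  | n + 1 => Bool × (α → Set (Inv α n))

instance inv_finite [Finite α] : ∀ n, Finite (Inv α n)
  | 0 => inferInstanceAs (Finite Bool)
  | n + 1 =>
    have : Finite (Inv α n) := inv_finite n
    inferInstanceAs (Finite (Bool × (α → Set (Inv α n))))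

/-- The order on invariants. -/
def leInv : ∀ n, Inv α n → Inv α n → Prop
  | 0, b₁, b₂ => b₂ = true → b₁ = true
  | _ + 1, x, y => (y.1 = true → x.1 = true) ∧ ∀ a, y.2 a ⊆ x.2 a

theorem leInv_refl : ∀ (n : ℕ) (x : Inv α n), leInv n x x
  | 0, _ => fun h => h
  | _ + 1, _ => ⟨fun h => h, fun _ => le_rfl⟩

theorem leInv_trans : ∀ (n : ℕ) (x y z : Inv α n), leInv n x y → leInv n y z → leInv n x z
  | 0, _, _, _, h1, h2 => fun h => h1 (h2 h)
  | _ + 1, _, _, _, h1, h2 =>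
    ⟨fun h => h1.1 (h2.1 h), fun a => (h2.2 a).trans (h1.2 a)⟩

/-- The invariant of a tree at level `n`. -/
def inv : (n : ℕ) → PreTree α → Inv α n
  | 0, t => t.mark
  | n + 1, t =>
    (t.mark, fun a => {x | ∃ p ∈ t.children, p.1 = a ∧ leInv n (inv n p.2) x})

theorem le_iff_leInv : ∀ (n : ℕ) (t u : PreTree α), height t ≤ n → height u ≤ n →
    (le t u ↔ leInv n (inv n t) (inv n u)) := by
  intro n
  induction n with
  | zero => intro t u ht; exact absurd ht (by have := height_pos t; omega)
  | succ n ih =>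
    intro t u ht hu
    cases t with | node b₁ c₁ =>
    cases u with | node b₂ c₂ =>
    rw [le_node_iff]
    show _ ↔ (_ ∧ _)
    constructor
    · rintro ⟨hb, hc⟩
      refine ⟨hb, fun a x hx => ?_⟩
      obtain ⟨q, hq, hql, hqle⟩ := hx
      obtain ⟨p, hp, hpl, hple⟩ := hc q hq
      have hle : leInv n (inv n p.2) (inv n q.2) := by
        rw [← ih]
        · exact hple
        · have := lt_of_lt_of_le (height_child_lt hp) ht; omega
        · have := lt_of_lt_of_le (height_child_lt hq) hu; omega
      exact ⟨p, hp, hpl.trans hql, leInv_trans n _ _ _ hle hqle⟩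
    · rintro ⟨hb, hc⟩
      refine ⟨hb, fun q hq => ?_⟩
      have hx : inv n q.2 ∈ {x | ∃ p ∈ c₂, p.1 = q.1 ∧ leInv n (inv n p.2) x} :=
        ⟨q, hq, rfl, leInv_refl n _⟩
      obtain ⟨p, hp, hpl, hple⟩ := hc q.1 hx
      refine ⟨p, hp, hpl, ?_⟩
      rw [ih]
      · exact hple
      · have := lt_of_lt_of_le (height_child_lt hp) ht; omega
      · have := lt_of_lt_of_le (height_child_lt hq) hu; omega

/-- No infinite strictly increasing chain over a finite alphabet. -/
theorem no_strict_chain [Finite α] :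
    ¬ ∃ f : ℕ → PreTree α, ∀ n, le (f n) (f (n + 1)) ∧ ¬ le (f (n + 1)) (f n) := by
  rintro ⟨f, hf⟩
  set h₀ := height (f 0) with hh0
  have hht : ∀ n, height (f n) ≤ h₀ := by
    intro n
    induction n with
    | zero => exact le_rfl
    | succ n ih => exact (height_antitone' (hf n).1).trans ih
  have hmono : ∀ i j, i ≤ j → le (f i) (f j) := by
    intro i j hij
    induction hij with
    | refl => exact le_refl _
    | step _ ih => exact le_trans' ih (hf _).1
  have : ∃ i j, i ≠ j ∧ inv h₀ (f i) = inv h₀ (f j) :=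
    Finite.exists_ne_map_eq_of_infinite _
  obtain ⟨i, j, hij, heq⟩ := this
  wlog hlt : i < j generalizing i j
  · exact this j i hij.symm heq.symm (by omega)
  have h1 : le (f j) (f i) := by
    rw [le_iff_leInv h₀ _ _ (hht j) (hht i), ← heq]
    exact leInv_refl _ _
  have h2 : le (f (i + 1)) (f j) := hmono _ _ hlt
  exact (hf i).2 (le_trans' h2 h1)

end PreTree

namespace FreeKAD
open PreTree

/-- For a finite alphabet `Σ`, the partial order `≤` on
reduced pointed `Σ`-labelled rooted trees is Noetherian (converse
well-founded): there is no infinite strictly `≤`-increasing sequence of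
reduced pointed trees; equivalently, every nonempty set of reduced pointed
trees contains a `≤`-maximal element. -/
theorem le_noetherian {α : Type} [Fintype α] :
    (¬ ∃ f : ℕ → PreTree α,
        (∀ n, (f n).Reduced ∧ (f n).Pointed) ∧
        (∀ n, le (f n) (f (n + 1)) ∧ ¬ le (f (n + 1)) (f n))) ∧
    (∀ S : Set (PreTree α), (∀ T ∈ S, T.Reduced ∧ T.Pointed) → S.Nonempty →
        ∃ T ∈ S, ∀ U ∈ S, le T U → le U T) := by
  have key := PreTree.no_strict_chain (α := α)
  constructor
  · rintro ⟨f, -, hf⟩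
    exact key ⟨f, hf⟩
  · intro S _ hne
    by_contra h
    push_neg at h
    obtain ⟨T₀, hT₀⟩ := hne
    choose g hg₁ hg₂ hg₃ using h
    let step : {T // T ∈ S} → {T // T ∈ S} := fun T => ⟨g T.1 T.2, hg₁ T.1 T.2⟩
    let f : ℕ → {T // T ∈ S} := fun n => Nat.rec ⟨T₀, hT₀⟩ (fun _ x => step x) n
    exact key ⟨fun n => (f n).1, fun n => ⟨hg₂ (f n).1 (f n).2, hg₃ (f n).1 (f n).2⟩⟩

end FreeKAD
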